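/- Assume C_R ⊆ m_R². For every integer k ≥ 1, one has m_S^k ⊆ x₁S if and only if m_R^k ⊆ x₁R + C_R. -/

import Mathlib

/-!
Write `D = (C_R : x₁) = {h : x₁h ∈ C_R}`, an ideal of `k⟦t⟧`, so that `S = R + D`. Every
element of `m_R` has order at least `a₁ = ord x₁`, hence is divisible by `x₁` in `k⟦t⟧`; since
`x₁D ⊆ C_R ⊆ m_R²`, also `D ⊆ x₁k⟦t⟧`. So `m_R·D` and `D·D` lie in `x₁D ⊆ C_R`, and for
`K ≥ 2` expanding `m_S^K ⊆ (m_R + D)^K` gives `m_S^K ⊆ m_R^K + C_R`, while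
`C_R = x₁D ⊆ x₁S`: this is the backward implication. The forward one comes from writing `f = x₁(r + d)` with `x₁d ∈ C_R`.
For `K = 1` both sides fail: `m_R ⊆ x₁R + C_R ⊆ x₁R + m_R²` iterates to
`m_R ⊆ x₁R + m_R^(N+1) = x₁R`, and then `x₁^N ∈ C_R` can be divided by `x₁` down to
`1 ∈ C_R`, that is, `R = k⟦t⟧`.
-/

open PowerSeries
set_option synthInstance.maxHeartbeats 1000000
set_option maxHeartbeats 1000000

noncomputable section

def mxl {k : Type*} [Field k] (R : Subalgebra k (PowerSeries k)) : Ideal R :=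
  RingHom.ker ((constantCoeff : PowerSeries k →+* k).comp R.val.toRingHom)

def condIdeal {k : Type*} [Field k] (R : Subalgebra k (PowerSeries k)) : Ideal R where
  carrier := {r : R | ∀ g : PowerSeries k, (r : PowerSeries k) * g ∈ R}
  add_mem' := by
    intro a b ha hb g
    have := R.add_mem (ha g) (hb g)
    simpa [add_mul] using this
  zero_mem' := by
    intro g
    simpa using R.zero_mem
  smul_mem' := by
    intro c x hx g
    have h : ((c • x : R) : PowerSeries k) * g
        = (c : PowerSeries k) * ((x : PowerSeries k) * g) := by
      rw [smul_eq_mul, MulMemClass.coe_mul]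
      ring
    rw [h]
    exact R.mul_mem c.2 (hx g)

/-- The reduced type `s(R) = dim_k (C_R + x₁R)/(x₁R)`, computed as the dimension of the
image of the conductor in `R/(x₁)`. -/
def redType {k : Type*} [Field k] (R : Subalgebra k (PowerSeries k)) (x1 : R) : ℕ :=
  Module.finrank k (Submodule.restrictScalars k
    (Ideal.map (Ideal.Quotient.mk (Ideal.span {x1})) (condIdeal R)))

namespace Ideal

variable {A : Type*} [CommSemiring A]

theorem le_sup_pow_of_le_sup_sq {I M : Ideal A} (h : M ≤ I ⊔ M ^ 2) (n : ℕ) :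
    M ≤ I ⊔ M ^ (n + 1) := by
  induction n with
  | zero => simp
  | succ n ih =>
    calc M ≤ I ⊔ M * M := by rwa [← sq]
      _ ≤ I ⊔ M * (I ⊔ M ^ (n + 1)) := sup_le_sup_left (mul_mono_right ih) _
      _ ≤ I ⊔ M ^ (n + 2) := by
        rw [mul_sup, ← pow_succ']
        exact sup_le le_sup_left (sup_le (mul_le_right.trans le_sup_left) le_sup_right)

theorem sup_pow_le_pow_sup {I J K : Ideal A} (hIJ : I * J ≤ K) (hJJ : J * J ≤ K) (n : ℕ) :
    (I ⊔ J) ^ (n + 2) ≤ I ^ (n + 2) ⊔ K := by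
  induction n with
  | zero =>
    rw [sq, sq, sup_mul, mul_sup, mul_sup, mul_comm J I]
    exact sup_le (sup_le le_sup_left (hIJ.trans le_sup_right))
      (sup_le (hIJ.trans le_sup_right) (hJJ.trans le_sup_right))
  | succ n ih =>
    calc (I ⊔ J) ^ (n + 3) = (I ⊔ J) ^ (n + 2) * (I ⊔ J) := pow_succ _ _
      _ ≤ (I ^ (n + 2) ⊔ K) * (I ⊔ J) := mul_mono_left ih
      _ ≤ I ^ (n + 3) ⊔ K := by
        rw [sup_mul, mul_sup, ← pow_succ]
        refine sup_le (sup_le le_sup_left ?_) (mul_le_left.trans le_sup_right)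
        exact ((mul_mono_left (pow_le_self (by omega))).trans hIJ).trans le_sup_right

theorem span_singleton_mul_colon_le (I : Ideal A) (x : A) : span {x} * I.colon {x} ≤ I :=
  span_singleton_mul_le_iff.mpr fun z hz => by
    rw [mul_comm]
    exact Submodule.mem_colon_singleton.mp hz

theorem le_span_singleton_mul_colon {I : Ideal A} {x : A} (h : I ≤ span {x}) :
    I ≤ span {x} * I.colon {x} := by
  intro c hc
  obtain ⟨w, rfl⟩ := mem_span_singleton'.mp (h hc)
  exact mem_span_singleton_mul.mpr ⟨w, Submodule.mem_colon_singleton.mpr hc, mul_comm _ _⟩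

end Ideal

theorem PowerSeries.dvd_of_order_le {k : Type*} [Field k] {f g : k⟦X⟧} (hf : f ≠ 0)
    (h : f.order ≤ g.order) : f ∣ g := by
  have hX : X ^ f.order.toNat ∣ g := by
    refine X_pow_dvd_iff.mpr fun m hm => coeff_of_lt_order m (lt_of_lt_of_le ?_ h)
    rw [← ENat.natCast_toNat (order_eq_top.not.mpr hf)]
    exact_mod_cast hm
  obtain ⟨u, hu⟩ := isUnit_divided_by_X_pow_order hf
  rw [← X_pow_order_mul_divXPowOrder (f := f), ← hu]
  exact Units.mul_right_dvd.mpr hX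

namespace Subalgebra

variable {K B : Type*} [CommSemiring K] [CommSemiring B] [Algebra K B]

def conductor (A : Subalgebra K B) : Ideal B where
  carrier := {b | ∀ c, b * c ∈ A}
  add_mem' {a b} ha hb c := by
    rw [add_mul]
    exact A.add_mem (ha c) (hb c)
  zero_mem' c := by
    rw [zero_mul]
    exact A.zero_mem
  smul_mem' a b hb c := by
    rw [smul_eq_mul, mul_comm a, mul_assoc]
    exact hb (a * c)

def addIdeal (A : Subalgebra K B) (I : Ideal B) : Subalgebra K B where
  carrier := {b | ∃ a ∈ A, ∃ i ∈ I, a + i = b}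
  mul_mem' := by
    rintro _ _ ⟨a, ha, i, hi, rfl⟩ ⟨a', ha', i', hi', rfl⟩
    exact ⟨a * a', A.mul_mem ha ha', a * i' + i * (a' + i'),
      I.add_mem (I.mul_mem_left a hi') (I.mul_mem_right _ hi), by ring⟩
  add_mem' := by
    rintro _ _ ⟨a, ha, i, hi, rfl⟩ ⟨a', ha', i', hi', rfl⟩
    exact ⟨a + a', A.add_mem ha ha', i + i', I.add_mem hi hi', by ring⟩
  algebraMap_mem' r := ⟨_, A.algebraMap_mem r, 0, I.zero_mem, add_zero _⟩

variable {A : Subalgebra K B}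

theorem mem_of_mem_conductor {b : B} (hb : b ∈ A.conductor) : b ∈ A := by
  simpa using hb 1

theorem eq_top_of_one_mem_conductor (h : (1 : B) ∈ A.conductor) : A = ⊤ :=
  eq_top_iff.mpr fun c _ => by simpa using h c

theorem adjoin_union_le_addIdeal (I : Ideal B) :
    Algebra.adjoin K (↑A ∪ ↑I) ≤ A.addIdeal I :=
  Algebra.adjoin_le <| by
    rintro b (hb | hb)
    · exact ⟨b, hb, 0, I.zero_mem, add_zero b⟩
    · exact ⟨0, A.zero_mem, b, hb, zero_add b⟩

end Subalgebra

section

open Subalgebra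

variable {k : Type*} [Field k] {R S : Subalgebra k k⟦X⟧} {x1 : k⟦X⟧}

theorem mxl_le_comap_span {a1 : ℕ} (hx1ord : x1.order = a1)
    (ha1min : ∀ f ∈ R, f ≠ 0 → constantCoeff f = 0 → (a1 : ℕ∞) ≤ f.order) :
    mxl R ≤ (Ideal.span {x1}).comap R.val := by
  have hx1 : x1 ≠ 0 := by
    rintro rfl
    simp at hx1ord
  intro f hf
  rw [Ideal.mem_comap, Ideal.mem_span_singleton]
  by_cases hf0 : (f : k⟦X⟧) = 0
  · simp [hf0]
  · exact dvd_of_order_le hx1 (hx1ord ▸ ha1min f f.2 hf0 hf)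

theorem conductor_colon_le_span (hx1 : x1 ≠ 0) (hm : mxl R ≤ (Ideal.span {x1}).comap R.val)
    (hC : condIdeal R ≤ mxl R ^ 2) : R.conductor.colon {x1} ≤ Ideal.span {x1} := by
  intro d hd
  have hdx : d * x1 ∈ R.conductor := Submodule.mem_colon_singleton.mp hd
  have hsq : (⟨d * x1, mem_of_mem_conductor hdx⟩ : R) ∈ (Ideal.span {x1} ^ 2).comap R.val :=
    (Ideal.le_comap_pow _ 2) (Ideal.pow_right_mono hm 2 (hC hdx))
  rw [Ideal.mem_comap, Ideal.span_singleton_pow, Ideal.mem_span_singleton, sq] at hsq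
  exact Ideal.mem_span_singleton.mpr ((mul_dvd_mul_iff_right hx1).mp hsq)

theorem conductor_le_span (hm : mxl R ≤ (Ideal.span {x1}).comap R.val)
    (hC : condIdeal R ≤ mxl R) : R.conductor ≤ Ideal.span {x1} :=
  fun c hc => hm (hC (show (⟨c, mem_of_mem_conductor hc⟩ : R) ∈ condIdeal R from hc))

theorem map_inclusion_mxl_le (hRS : R ≤ S) : (mxl R).map (inclusion hRS) ≤ mxl S :=
  Ideal.map_le_iff_le_comap.mpr fun _ hf => hf

theorem map_inclusion_condIdeal_le (hRS : R ≤ S) :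
    (condIdeal R).map (inclusion hRS) ≤ R.conductor.comap S.val :=
  Ideal.map_le_iff_le_comap.mpr fun _ hf => hf

theorem map_inclusion_mxl_le_comap_span (hRS : R ≤ S)
    (hm : mxl R ≤ (Ideal.span {x1}).comap R.val) :
    (mxl R).map (inclusion hRS) ≤ (Ideal.span {x1}).comap S.val :=
  Ideal.map_le_iff_le_comap.mpr fun _ hf => hm hf

section adjoinColon

variable (hS : S = Algebra.adjoin k (↑R ∪ ↑(R.conductor.colon {x1}))) (hRS : R ≤ S)
include hS

theorem le_of_eq_adjoin : R ≤ S :=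
  hS ▸ fun _ hr => Algebra.subset_adjoin (Or.inl hr)

theorem conductor_colon_subset : (R.conductor.colon {x1} : Set k⟦X⟧) ⊆ S :=
  hS ▸ fun _ hd => Algebra.subset_adjoin (Or.inr hd)

theorem mxl_le_map_sup_comap_colon (hD : R.conductor.colon {x1} ≤ Ideal.span {x1})
    (hx1 : constantCoeff x1 = 0) :
    mxl S ≤ (mxl R).map (inclusion hRS) ⊔ (R.conductor.colon {x1}).comap S.val := by
  intro s hs
  obtain ⟨r, hr, d, hd, hrd⟩ := adjoin_union_le_addIdeal _ (by rw [← hS]; exact s.2)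
  have hd0 : constantCoeff d = 0 := by
    obtain ⟨w, rfl⟩ := Ideal.mem_span_singleton'.mp (hD hd)
    simp [hx1]
  have hr0 : (⟨r, hr⟩ : R) ∈ mxl R := by
    change constantCoeff r = 0
    have hs0 : constantCoeff (s : k⟦X⟧) = 0 := hs
    rwa [← hrd, map_add, hd0, add_zero] at hs0
  exact Submodule.mem_sup.mpr
    ⟨_, Ideal.mem_map_of_mem _ hr0, ⟨d, conductor_colon_subset hS hd⟩, hd, Subtype.ext hrd⟩

theorem comap_conductor_le_span (hx1S : x1 ∈ S) (hCx : R.conductor ≤ Ideal.span {x1}) :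
    R.conductor.comap S.val ≤ Ideal.span {⟨x1, hx1S⟩} := by
  intro s hs
  obtain ⟨d, hd, hds⟩ :=
    Ideal.mem_span_singleton_mul.mp (Ideal.le_span_singleton_mul_colon hCx hs)
  exact Ideal.mem_span_singleton'.mpr
    ⟨⟨d, conductor_colon_subset hS hd⟩, Subtype.ext (by simpa [mul_comm] using hds)⟩

theorem pow_mxl_le_map_pow_sup_comap_conductor (hm : mxl R ≤ (Ideal.span {x1}).comap R.val)
    (hD : R.conductor.colon {x1} ≤ Ideal.span {x1}) (hx1 : constantCoeff x1 = 0) (n : ℕ) :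
    mxl S ^ (n + 2) ≤ (mxl R ^ (n + 2)).map (inclusion hRS) ⊔ R.conductor.comap S.val := by
  have hspan := Ideal.span_singleton_mul_colon_le R.conductor x1
  rw [Ideal.map_pow]
  refine (Ideal.pow_right_mono (mxl_le_map_sup_comap_colon hS hRS hD hx1) _).trans
    (Ideal.sup_pow_le_pow_sup ?_ ?_ n)
  · exact ((Ideal.mul_mono_left (map_inclusion_mxl_le_comap_span hRS hm)).trans
      (Ideal.le_comap_mul _)).trans (Ideal.comap_mono hspan)
  · exact ((Ideal.mul_mono_left (Ideal.comap_mono hD)).trans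
      (Ideal.le_comap_mul _)).trans (Ideal.comap_mono hspan)

theorem pow_mxl_le_span_sup_condIdeal_of_le (hx1R : x1 ∈ R) (hx1S : x1 ∈ S) (K : ℕ)
    (h : mxl S ^ K ≤ Ideal.span {⟨x1, hx1S⟩}) :
    mxl R ^ K ≤ Ideal.span {⟨x1, hx1R⟩} ⊔ condIdeal R := by
  have hRS := le_of_eq_adjoin hS
  intro f hf
  have hfS : inclusion hRS f ∈ mxl S ^ K := by
    refine Ideal.pow_right_mono (map_inclusion_mxl_le hRS) K ?_
    rw [← Ideal.map_pow]
    exact Ideal.mem_map_of_mem _ hf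
  obtain ⟨s, hs⟩ := Ideal.mem_span_singleton'.mp (h hfS)
  obtain ⟨r, hr, d, hd, hrd⟩ := adjoin_union_le_addIdeal _ (by rw [← hS]; exact s.2)
  have hdx : d * x1 ∈ R.conductor := Submodule.mem_colon_singleton.mp hd
  refine Submodule.mem_sup.mpr ⟨⟨r, hr⟩ * ⟨x1, hx1R⟩,
    Ideal.mul_mem_left _ _ (Ideal.mem_span_singleton_self _),
    ⟨d * x1, mem_of_mem_conductor hdx⟩, hdx, Subtype.ext ?_⟩
  have hsx : (s : k⟦X⟧) * x1 = f := congrArg Subtype.val hs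
  simp [← hsx, ← hrd, add_mul]

theorem pow_mxl_le_span_of_le_sup (hx1R : x1 ∈ R) (hx1S : x1 ∈ S) (hx1 : x1 ≠ 0)
    (hx1cc : constantCoeff x1 = 0)
    (hm : mxl R ≤ (Ideal.span {x1}).comap R.val) (hC : condIdeal R ≤ mxl R ^ 2) (n : ℕ)
    (h : mxl R ^ (n + 2) ≤ Ideal.span {⟨x1, hx1R⟩} ⊔ condIdeal R) :
    mxl S ^ (n + 2) ≤ Ideal.span {⟨x1, hx1S⟩} := by
  have hRS := le_of_eq_adjoin hS
  have hCS := comap_conductor_le_span hS hx1S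
    (conductor_le_span hm (hC.trans (Ideal.pow_le_self two_ne_zero)))
  have hspan : (Ideal.span {⟨x1, hx1R⟩}).map (inclusion hRS) = Ideal.span {⟨x1, hx1S⟩} := by
    rw [Ideal.map_span, Set.image_singleton]
    rfl
  calc mxl S ^ (n + 2) ≤ (mxl R ^ (n + 2)).map (inclusion hRS) ⊔ R.conductor.comap S.val :=
        pow_mxl_le_map_pow_sup_comap_conductor hS hRS hm (conductor_colon_le_span hx1 hm hC) hx1cc n
    _ ≤ (Ideal.span {⟨x1, hx1R⟩} ⊔ condIdeal R).map (inclusion hRS) ⊔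
          R.conductor.comap S.val :=
        sup_le_sup_right (Ideal.map_mono h) _
    _ ≤ Ideal.span {⟨x1, hx1S⟩} := by
        rw [Ideal.map_sup, hspan]
        exact sup_le (sup_le le_rfl ((map_inclusion_condIdeal_le hRS).trans hCS)) hCS

end adjoinColon

theorem pow_mxl_le_span (hx1R : x1 ∈ R) (hm : mxl R ≤ (Ideal.span {x1}).comap R.val) {N : ℕ}
    (hN : x1 ^ N ∈ R.conductor) : mxl R ^ (N + 1) ≤ Ideal.span {⟨x1, hx1R⟩} := by
  intro f hf
  have hdvd : (f : k⟦X⟧) ∈ Ideal.span {x1} ^ (N + 1) :=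
    Ideal.le_comap_pow _ _ (Ideal.pow_right_mono hm _ hf)
  obtain ⟨w, hw⟩ := Ideal.mem_span_singleton.mp (Ideal.span_singleton_pow x1 (N + 1) ▸ hdvd)
  exact Ideal.mem_span_singleton'.mpr
    ⟨⟨x1 ^ N * w, hN w⟩, Subtype.ext (by simp [hw, pow_succ]; ring)⟩

theorem eq_top_of_mxl_le_span (hx1R : x1 ∈ R) (hx1 : x1 ≠ 0) (hx1cc : constantCoeff x1 = 0)
    {N : ℕ} (hN : x1 ^ N ∈ R.conductor) (h : mxl R ≤ Ideal.span {⟨x1, hx1R⟩}) :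
    R = ⊤ := by
  refine eq_top_of_one_mem_conductor (pow_zero x1 ▸ Nat.decreasingInduction
    (motive := fun j _ => x1 ^ j ∈ R.conductor) ?_ hN (Nat.zero_le N))
  intro j _ hj g
  have hmem : (⟨x1 ^ (j + 1) * g, hj g⟩ : R) ∈ mxl R := by
    change constantCoeff (x1 ^ (j + 1) * g) = 0
    simp [hx1cc]
  obtain ⟨r, hr⟩ := Ideal.mem_span_singleton'.mp (h hmem)
  have hrx : (r : k⟦X⟧) * x1 = x1 ^ (j + 1) * g := congrArg Subtype.val hr
  have hcancel : x1 * (x1 ^ j * g) = x1 * r := by linear_combination -hrx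
  rw [mul_left_cancel₀ hx1 hcancel]
  exact r.2

theorem not_mxl_le_span_sup_condIdeal (hR : R ≠ ⊤) (hx1R : x1 ∈ R) (hx1 : x1 ≠ 0)
    (hx1cc : constantCoeff x1 = 0) (hm : mxl R ≤ (Ideal.span {x1}).comap R.val)
    (hC : condIdeal R ≤ mxl R ^ 2) {N : ℕ} (hN : x1 ^ N ∈ R.conductor) :
    ¬ mxl R ≤ Ideal.span {⟨x1, hx1R⟩} ⊔ condIdeal R := by
  intro h
  refine hR (eq_top_of_mxl_le_span hx1R hx1 hx1cc hN ?_)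
  calc mxl R ≤ Ideal.span {⟨x1, hx1R⟩} ⊔ mxl R ^ (N + 1) :=
        Ideal.le_sup_pow_of_le_sup_sq (h.trans (sup_le_sup_left hC _)) N
    _ ≤ Ideal.span {⟨x1, hx1R⟩} := sup_le le_rfl (pow_mxl_le_span hx1R hm hN)

end

theorem stmt13_general {k : Type*} [Field k]
    (R : Subalgebra k (PowerSeries k)) (hR : R ≠ ⊤)
    (hN : ∃ N : ℕ, 1 ≤ N ∧ ∀ g : PowerSeries k, (X : PowerSeries k) ^ N * g ∈ R)
    (a1 : ℕ) (ha1pos : 0 < a1) (x1 : PowerSeries k) (hx1R : x1 ∈ R)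
    (hx1ord : x1.order = a1)
    (ha1min : ∀ f ∈ R, f ≠ 0 → (constantCoeff : PowerSeries k →+* k) f = 0 → (a1 : ℕ∞) ≤ f.order)
    (hC : condIdeal R ≤ (mxl R) ^ 2)
    (S : Subalgebra k (PowerSeries k))
    (hS : S = Algebra.adjoin k ((R : Set (PowerSeries k)) ∪
        {h : PowerSeries k | ∀ g : PowerSeries k, (x1 * h) * g ∈ R}))
    (hx1S : x1 ∈ S) :
    ∀ K : ℕ, 1 ≤ K →
      ((mxl S) ^ K ≤ Ideal.span {(⟨x1, hx1S⟩ : S)} ↔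
        (mxl R) ^ K ≤ Ideal.span {(⟨x1, hx1R⟩ : R)} ⊔ condIdeal R) := by
  obtain ⟨N, -, hXN⟩ := hN
  have hx1 : x1 ≠ 0 := by
    rintro rfl
    simp at hx1ord
  have hx1cc : constantCoeff x1 = 0 := by
    simpa using coeff_of_lt_order 0 (hx1ord ▸ (Nat.cast_pos.mpr ha1pos : (0 : ℕ∞) < a1))
  have hx1N : x1 ^ N ∈ R.conductor :=
    Ideal.mem_of_dvd _ (pow_dvd_pow_of_dvd (X_dvd_iff.mpr hx1cc) N) hXN
  have hm := mxl_le_comap_span hx1ord ha1min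
  have hD : {h | ∀ g, x1 * h * g ∈ R} = (R.conductor.colon {x1} : Set k⟦X⟧) := by
    ext h
    rw [SetLike.mem_coe, Submodule.mem_colon_singleton, smul_eq_mul, mul_comm]
    rfl
  rw [hD] at hS
  intro K hK
  refine ⟨pow_mxl_le_span_sup_condIdeal_of_le hS hx1R hx1S K, fun h => ?_⟩
  obtain rfl | hK2 := hK.eq_or_lt
  · exact (not_mxl_le_span_sup_condIdeal hR hx1R hx1 hx1cc hm hC hx1N (by simpa using h)).elim
  · obtain ⟨n, rfl⟩ := Nat.exists_eq_add_of_le' hK2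
    exact pow_mxl_le_span_of_le_sup hS hx1R hx1S hx1 hx1cc hm hC n h

theorem stmt13 {k : Type*} [Field k] [IsAlgClosed k] [CharZero k]
    (R : Subalgebra k (PowerSeries k)) (hR : R ≠ ⊤)
    (hN : ∃ N : ℕ, 1 ≤ N ∧ ∀ g : PowerSeries k, (X : PowerSeries k) ^ N * g ∈ R)
    (a1 : ℕ) (ha1pos : 0 < a1) (x1 : PowerSeries k) (hx1R : x1 ∈ R)
    (hx1ord : x1.order = a1)
    (ha1min : ∀ f ∈ R, f ≠ 0 → (constantCoeff : PowerSeries k →+* k) f = 0 → (a1 : ℕ∞) ≤ f.order)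
    (hC : condIdeal R ≤ (mxl R) ^ 2)
    (S : Subalgebra k (PowerSeries k))
    (hS : S = Algebra.adjoin k ((R : Set (PowerSeries k)) ∪
        {h : PowerSeries k | ∀ g : PowerSeries k, (x1 * h) * g ∈ R}))
    (hx1S : x1 ∈ S) :
    ∀ K : ℕ, 1 ≤ K →
      ((mxl S) ^ K ≤ Ideal.span {(⟨x1, hx1S⟩ : S)} ↔
        (mxl R) ^ K ≤ Ideal.span {(⟨x1, hx1R⟩ : R)} ⊔ condIdeal R) :=
  stmt13_general R hR hN a1 ha1pos x1 hx1R hx1ord ha1min hC S hS hx1S
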